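/- arXiv:2503.01188 — 5 statements merged into one kernel-verified Lean document; each statement's English description precedes it below -/
import Mathlib

section
/- Let X be a class of objects in an abelian category A, and suppose X1 → X2 → X3 → ⋯ is a direct system in A in which every transition map is a split monomorphism. If each Xi belongs to X and X is closed under direct sums and direct summands, then the direct limit colim Xi belongs to X. -/
open CategoryTheory Category Limits ZeroObject

universe v u

namespace Paper

variable {A : Type u} [Category.{v} A] [Abelian A]

/-- Chain complexes over `A` indexed by `ℤ` (homological convention). -/
abbrev Cx (A : Type u) [Category.{v} A] [Abelian A] := ChainComplex A ℤ

/-- A chain map is null homotopic if it is homotopic to the zero map. -/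
def NullHomotopic {X Y : Cx A} (f : X ⟶ Y) : Prop := Nonempty (Homotopy f 0)

/-- A complex is contractible if its identity is null homotopic. -/
def Contractible (X : Cx A) : Prop := Nonempty (Homotopy (𝟙 X) (0 : X ⟶ X))

/-- `Hom_A(X, E)` is exact at degree `n` for every `X ∈ 𝒳`. -/
def RightAcyclicAt (𝒳 : Set A) (E : Cx A) (n : ℤ) : Prop :=
  ∀ ⦃X : A⦄, X ∈ 𝒳 → ∀ g : X ⟶ E.X n, g ≫ E.d n (n - 1) = 0 →
    ∃ h : X ⟶ E.X (n + 1), h ≫ E.d (n + 1) n = g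

/-- The complex `E` is right `𝒳`-acyclic. -/
def RightAcyclic (𝒳 : Set A) (E : Cx A) : Prop := ∀ n : ℤ, RightAcyclicAt 𝒳 E n

/-- `Hom_A(E, Y)` is exact at (cohomological) degree `n` for every `Y ∈ 𝒴`. -/
def LeftAcyclicAt (𝒴 : Set A) (E : Cx A) (n : ℤ) : Prop :=
  ∀ ⦃Y : A⦄, Y ∈ 𝒴 → ∀ g : E.X n ⟶ Y, E.d (n + 1) n ≫ g = 0 →
    ∃ h : E.X (n - 1) ⟶ Y, E.d n (n - 1) ≫ h = g

/-- The complex `E` is left `𝒴`-acyclic. -/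
def LeftAcyclic (𝒴 : Set A) (E : Cx A) : Prop := ∀ n : ℤ, LeftAcyclicAt 𝒴 E n

/-- `f : X ⟶ M` is a right `𝒳`-approximation of `M`. -/
def IsRightApprox (𝒳 : Set A) {X M : A} (f : X ⟶ M) : Prop :=
  ∀ ⦃X' : A⦄, X' ∈ 𝒳 → ∀ g : X' ⟶ M, ∃ h : X' ⟶ X, h ≫ f = g

/-- `f : M ⟶ Y` is a left `𝒴`-approximation of `M`. -/
def IsLeftApprox (𝒴 : Set A) {M Y : A} (f : M ⟶ Y) : Prop :=
  ∀ ⦃Y' : A⦄, Y' ∈ 𝒴 → ∀ g : M ⟶ Y', ∃ h : Y ⟶ Y', f ≫ h = g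

/-- `R` is an augmented `𝒳`-resolution of `M`:  `⋯ → X₁ → X₀ → M → 0`, with the
`𝒳`-objects placed in degrees `≥ 0` and `M` in degree `-1`. -/
def IsAugXRes (𝒳 : Set A) (M : A) (R : Cx A) : Prop :=
  (∀ n : ℤ, 0 ≤ n → R.X n ∈ 𝒳) ∧ (∀ n : ℤ, n < -1 → IsZero (R.X n)) ∧
    Nonempty (R.X (-1) ≅ M)

/-- `R` is an augmented `𝒴`-coresolution of `M`: `0 → M → Y⁰ → Y¹ → ⋯`, with `M` in
degree `0` and the `𝒴`-objects in degrees `≤ -1`. -/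
def IsAugYCores (𝒴 : Set A) (M : A) (R : Cx A) : Prop :=
  (∀ n : ℤ, n ≤ -1 → R.X n ∈ 𝒴) ∧ (∀ n : ℤ, 0 < n → IsZero (R.X n)) ∧
    Nonempty (R.X 0 ≅ M)

/-- A balanced pair `(𝒳, 𝒴)` of (full additive, isomorphism- and summand-closed)
subcategories of `A`. -/
structure BalancedPair (𝒳 𝒴 : Set A) : Prop where
  isoClosedX : ∀ ⦃X X' : A⦄, X ∈ 𝒳 → (X ≅ X') → X' ∈ 𝒳
  isoClosedY : ∀ ⦃Y Y' : A⦄, Y ∈ 𝒴 → (Y ≅ Y') → Y' ∈ 𝒴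
  summandClosedX : ∀ ⦃X S : A⦄, X ∈ 𝒳 → ∀ (s : S ⟶ X) (r : X ⟶ S), s ≫ r = 𝟙 S → S ∈ 𝒳
  summandClosedY : ∀ ⦃Y S : A⦄, Y ∈ 𝒴 → ∀ (s : S ⟶ Y) (r : Y ⟶ S), s ≫ r = 𝟙 S → S ∈ 𝒴
  contravariantlyFinite : ∀ M : A, ∃ X ∈ 𝒳, ∃ f : X ⟶ M, IsRightApprox 𝒳 f
  covariantlyFinite : ∀ M : A, ∃ Y ∈ 𝒴, ∃ f : M ⟶ Y, IsLeftApprox 𝒴 f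
  resolution : ∀ M : A, ∃ R : Cx A, IsAugXRes 𝒳 M R ∧ RightAcyclic 𝒳 R ∧ LeftAcyclic 𝒴 R
  coresolution : ∀ M : A, ∃ R : Cx A, IsAugYCores 𝒴 M R ∧ RightAcyclic 𝒳 R ∧ LeftAcyclic 𝒴 R

/-- The balanced pair `(𝒳, 𝒴)` is admissible: every right `𝒳`-approximation is epic and
every left `𝒴`-approximation is monic. -/
def Admissible (𝒳 𝒴 : Set A) : Prop :=
  (∀ ⦃X M : A⦄, X ∈ 𝒳 → ∀ f : X ⟶ M, IsRightApprox 𝒳 f → Epi f) ∧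
  (∀ ⦃M Y : A⦄, Y ∈ 𝒴 → ∀ f : M ⟶ Y, IsLeftApprox 𝒴 f → Mono f)

/-- A short exact sequence of `A` belonging to the exact structure `E` induced by `𝒳`:
it is exact and remains exact after applying `Hom_A(X, -)` for every `X ∈ 𝒳`. -/
def EExact (𝒳 : Set A) {D W C : A} (i : D ⟶ W) (p : W ⟶ C) : Prop :=
  ∃ w : i ≫ p = 0, (ShortComplex.mk i p w).ShortExact ∧
    ∀ ⦃X : A⦄, X ∈ 𝒳 → ∀ g : X ⟶ C, ∃ h : X ⟶ W, h ≫ p = g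

/-- A short exact sequence of complexes which is degreewise in `E`. -/
def ChEExact (𝒳 : Set A) {D W C : Cx A} (i : D ⟶ W) (p : W ⟶ C) : Prop :=
  ∀ n : ℤ, EExact 𝒳 (i.f n) (p.f n)

/-- Vanishing of `Ext¹` in the exact category `Ch(A, E)`: every admissible short exact
sequence `0 → D → W → C → 0` in `Ch(A, E)` splits. -/
def Ext1ChVanish (𝒳 : Set A) (C D : Cx A) : Prop :=
  ∀ ⦃W : Cx A⦄ (i : D ⟶ W) (p : W ⟶ C), ChEExact 𝒳 i p → ∃ r : W ⟶ D, i ≫ r = 𝟙 D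

/-- The class `Ẽ` of right `𝒳`-acyclic complexes. -/
def Etilde (𝒳 : Set A) : Set (Cx A) := {E | RightAcyclic 𝒳 E}

/-- The class `E-dw X̃` of complexes with all terms in `𝒳`. -/
def dwX (𝒳 : Set A) : Set (Cx A) := {G | ∀ n : ℤ, G.X n ∈ 𝒳}

/-- The class `E-dg X̃`: complexes with terms in `𝒳` such that every chain map to a right
`𝒳`-acyclic complex is null homotopic. -/
def EdgX (𝒳 : Set A) : Set (Cx A) :=
  {G | (∀ n : ℤ, G.X n ∈ 𝒳) ∧ ∀ E ∈ Etilde 𝒳, ∀ f : G ⟶ E, NullHomotopic f}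

/-- The right `Ext¹`-orthogonal class of `E-dw X̃` in `Ch(A, E)`. -/
def dwPerp (𝒳 : Set A) : Set (Cx A) := {C | ∀ G ∈ dwX 𝒳, Ext1ChVanish 𝒳 G C}

/-- The class `X̃_E` of right `𝒳`-acyclic complexes all of whose cycles lie in `𝒳`. -/
def XtildeE (𝒳 : Set A) : Set (Cx A) :=
  {G | RightAcyclic 𝒳 G ∧ ∀ n : ℤ, kernel (G.d n (n - 1)) ∈ 𝒳}

/-- The disk complex `Dⁿ(M)`: `M` in degrees `n` and `n - 1`, identity differential. -/
noncomputable def disk (M : A) (n : ℤ) : Cx A where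
  X k := if k = n ∨ k = n - 1 then M else 0
  d i j :=
    if h : i = n ∧ j = n - 1 then
      eqToHom (by simp [h.1, h.2])
    else 0
  shape i j hij := by
    try dsimp only
    rw [dif_neg]
    rintro ⟨rfl, rfl⟩
    exact hij (by rw [ComplexShape.down_Rel]; omega)
  d_comp_d' i j k _ _ := by
    try dsimp only
    by_cases h : j = n ∧ k = n - 1
    · rw [dif_neg (by rintro ⟨-, rfl⟩; omega : ¬(i = n ∧ j = n - 1)), zero_comp]
    · rw [dif_neg h, comp_zero]

/-- The shift `Σᵏ C`, with `(Σᵏ C)ₙ = C_{n-k}` and differential `(-1)ᵏ d`. -/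
@[simps] def shiftC (C : Cx A) (k : ℤ) : Cx A where
  X n := C.X (n - k)
  d i j := (k.negOnePow : ℤ) • C.d (i - k) (j - k)
  shape i j hij := by
    try dsimp only
    rw [C.shape, smul_zero]
    simp only [ComplexShape.down_Rel] at *
    omega
  d_comp_d' i j k _ _ := by
    try dsimp only
    rw [Preadditive.zsmul_comp, Preadditive.comp_zsmul, C.d_comp_d, smul_zero, smul_zero]

/-- Acyclicity of a complex. -/
def AcyclicCx (C : Cx A) : Prop := ∀ n : ℤ, C.ExactAt n

/-- Vanishing of the ordinary `Ext¹` in the abelian category `A`. -/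
def Ext1Vanish (X Z : A) : Prop :=
  ∀ ⦃W : A⦄ (i : Z ⟶ W) (p : W ⟶ X) (w : i ≫ p = 0),
    (ShortComplex.mk i p w).ShortExact → ∃ r : W ⟶ Z, i ≫ r = 𝟙 Z

/-- `(𝒻, 𝒞)` is a cotorsion pair in the abelian category `A`. -/
def CotorsionPair (𝒻 𝒞 : Set A) : Prop :=
  (∀ X : A, X ∈ 𝒻 ↔ ∀ Z ∈ 𝒞, Ext1Vanish X Z) ∧
  (∀ Z : A, Z ∈ 𝒞 ↔ ∀ X ∈ 𝒻, Ext1Vanish X Z)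

/-- Completeness of a cotorsion pair. -/
def CompletePair (𝒻 𝒞 : Set A) : Prop :=
  (∀ M : A, ∃ (Z F : A) (i : Z ⟶ F) (p : F ⟶ M) (w : i ≫ p = 0),
      (ShortComplex.mk i p w).ShortExact ∧ F ∈ 𝒻 ∧ Z ∈ 𝒞) ∧
  (∀ M : A, ∃ (Z F : A) (i : M ⟶ Z) (p : Z ⟶ F) (w : i ≫ p = 0),
      (ShortComplex.mk i p w).ShortExact ∧ Z ∈ 𝒞 ∧ F ∈ 𝒻)

/-- Heredity of a cotorsion pair. -/
def HereditaryPair (𝒻 𝒞 : Set A) : Prop :=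
  (∀ ⦃X Y Z : A⦄ (i : X ⟶ Y) (p : Y ⟶ Z) (w : i ≫ p = 0),
      (ShortComplex.mk i p w).ShortExact → Y ∈ 𝒻 → Z ∈ 𝒻 → X ∈ 𝒻) ∧
  (∀ ⦃X Y Z : A⦄ (i : X ⟶ Y) (p : Y ⟶ Z) (w : i ≫ p = 0),
      (ShortComplex.mk i p w).ShortExact → X ∈ 𝒞 → Y ∈ 𝒞 → Z ∈ 𝒞)

/-- A complete hereditary cotorsion triple `(𝒳, 𝒵, 𝒴)`. -/
def CotorsionTriple (𝒳 𝒵 𝒴 : Set A) : Prop :=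
  CotorsionPair 𝒳 𝒵 ∧ CotorsionPair 𝒵 𝒴 ∧
  CompletePair 𝒳 𝒵 ∧ CompletePair 𝒵 𝒴 ∧
  HereditaryPair 𝒳 𝒵 ∧ HereditaryPair 𝒵 𝒴

section SplitSequentialColimit

variable {C : Type*} [Category C] [Preadditive C] (F : ℕ ⥤ C)
  [∀ n, IsSplitMono (F.map (homOfLE (Nat.le_succ n)))] [HasCoproduct F.obj]

/-- Components of a section of `Sigma.desc (colimit.ι F) : ∐ F.obj ⟶ colimit F`. With `s` the
transition map and `ρ` its retraction, `F.obj (n + 1)` is the direct sum of the images of the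
idempotents `ρ ≫ s` and `1 - ρ ≫ s`: the first part is sent through `ρ` to the previous
component, the second to its own cofactor of `∐ F.obj`. -/
noncomputable def sigmaSection : (n : ℕ) → F.obj n ⟶ ∐ F.obj
  | 0 => Sigma.ι F.obj 0
  | n + 1 =>
    retraction (F.map (homOfLE (Nat.le_succ n))) ≫ sigmaSection n +
      (𝟙 _ - retraction (F.map (homOfLE (Nat.le_succ n))) ≫ F.map (homOfLE (Nat.le_succ n))) ≫
        Sigma.ι F.obj (n + 1)

lemma map_succ_comp_sigmaSection (n : ℕ) :
    F.map (homOfLE (Nat.le_succ n)) ≫ sigmaSection F (n + 1) = sigmaSection F n := by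
  simp only [sigmaSection, Preadditive.comp_add, Preadditive.comp_sub, Preadditive.sub_comp,
    assoc, IsSplitMono.id_assoc, id_comp, sub_self, add_zero]

noncomputable def sigmaSectionCocone : Cocone F where
  pt := ∐ F.obj
  ι := NatTrans.ofSequence (sigmaSection F) fun n => by
    simpa using map_succ_comp_sigmaSection F n

lemma sigmaSection_comp_desc [HasColimit F] (n : ℕ) :
    sigmaSection F n ≫ Sigma.desc (colimit.ι F) = colimit.ι F n := by
  induction n with
  | zero => simp [sigmaSection]
  | succ n ih =>
    have hw := colimit.w F (homOfLE (Nat.le_succ n))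
    simp only [sigmaSection, Preadditive.add_comp, Preadditive.sub_comp, id_comp, assoc,
      Sigma.ι_desc, ih, hw]
    abel

noncomputable def colimitRetractSigma [HasColimit F] : Retract (colimit F) (∐ F.obj) where
  i := colimit.desc F (sigmaSectionCocone F)
  r := Sigma.desc (colimit.ι F)
  retract := colimit.hom_ext fun n => by
    simp [sigmaSectionCocone, sigmaSection_comp_desc]

end SplitSequentialColimit

theorem stmt_0_general {A : Type u} [Category.{v} A] [Abelian A] [HasColimits A]
    (𝒳 : Set A)
    (summandClosed : ∀ ⦃X S : A⦄, X ∈ 𝒳 → ∀ (s : S ⟶ X) (r : X ⟶ S), s ≫ r = 𝟙 S → S ∈ 𝒳)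
    (sumClosed : ∀ g : ℕ → A, (∀ i, g i ∈ 𝒳) → (∐ g) ∈ 𝒳)
    (F : ℕ ⥤ A) (hX : ∀ i : ℕ, F.obj i ∈ 𝒳)
    (hsplit : ∀ i : ℕ, IsSplitMono (F.map (homOfLE (Nat.le_succ i)))) :
    colimit F ∈ 𝒳 := by
  let e := colimitRetractSigma F
  exact summandClosed (sumClosed F.obj hX) e.i e.r e.retract

/-- If `X₁ → X₂ → ⋯` is a direct system with split monic transition maps,
all terms in a class `𝒳` closed under isomorphisms, direct summands and (countable) direct
sums, then the colimit lies in `𝒳`. -/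
theorem stmt_0 {A : Type u} [Category.{v} A] [Abelian A] [HasColimits A]
    (𝒳 : Set A)
    (isoClosed : ∀ ⦃X X' : A⦄, X ∈ 𝒳 → (X ≅ X') → X' ∈ 𝒳)
    (summandClosed : ∀ ⦃X S : A⦄, X ∈ 𝒳 → ∀ (s : S ⟶ X) (r : X ⟶ S), s ≫ r = 𝟙 S → S ∈ 𝒳)
    (sumClosed : ∀ g : ℕ → A, (∀ i, g i ∈ 𝒳) → (∐ g) ∈ 𝒳)
    (F : ℕ ⥤ A) (hX : ∀ i : ℕ, F.obj i ∈ 𝒳)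
    (hsplit : ∀ i : ℕ, IsSplitMono (F.map (homOfLE (Nat.le_succ i)))) :
    colimit F ∈ 𝒳 :=
  stmt_0_general 𝒳 summandClosed sumClosed F hX hsplit

end Paper
end

section
/- Let A¹ → A² → ⋯ be a direct system of chain complexes over a cocomplete abelian category in which each transition map is a degreewise split monomorphism, and let E be a fixed complex. If Hom_A(Aⁱ, E) is an acyclic complex of abelian groups for every i (i.e., every chain map Aⁱ → Σⁿ E is null homotopic for all n), then Hom_A(colim Aⁱ, E) is acyclic; in particular every chain map colim Aⁱ → E is null homotopic. -/
open CategoryTheory Category Limits ZeroObject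

universe v u

namespace Paper

variable {A : Type u} [Category.{v} A] [Abelian A]

/-!
Write `gᵢ` for the restriction of `g : colim Aⁱ ⟶ Σⁿ E` to `Aⁱ`. It suffices to choose null
homotopies `sᵢ` of the `gᵢ` with `sᵢ₊₁` restricting to `sᵢ`, since compatible homotopies glue
degreewise on the colimit. Given `sᵢ` and an arbitrary null homotopy `s` of `gᵢ₊₁`, the difference
`sᵢ - s|Aⁱ` is a degree-one cycle of `Hom(Aⁱ, Σⁿ E)`, i.e. a chain map `Aⁱ ⟶ Σⁿ⁻¹ E`. It is null
homotopic by hypothesis, so the cycle is a boundary `∂τ`. Extending `τ` to `Aⁱ⁺¹` through a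
degreewise retraction of `Aⁱ ⟶ Aⁱ⁺¹` gives `τ'`, and `s + ∂τ'` is a null homotopy of `gᵢ₊₁`
restricting to `sᵢ`.
-/

section GeneralShape

variable {C : Type*} [Category C] [Preadditive C] {ι : Type*} {c : ComplexShape ι}
  {X X₁ X₂ Y : HomologicalComplex C c}

open Classical in
/-- A `Homotopy (0 : X ⟶ Y) 0` is a degree-one cycle of the Hom complex `Hom(X, Y)`; this is the
differential of the degree-two element `τ`. -/
noncomputable def boundaryHomotopy (τ : ∀ i j, X.X i ⟶ Y.X j) : Homotopy (0 : X ⟶ Y) 0 where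
  hom i j := if c.Rel j i then
    X.d i (c.next i) ≫ τ (c.next i) j - τ i (c.prev j) ≫ Y.d (c.prev j) j else 0
  zero _ _ h := if_neg h
  comm i := by
    by_cases hi : c.Rel i (c.next i) <;> by_cases hi' : c.Rel (c.prev i) i <;>
      simp [dNext, prevD, hi, hi']

lemma boundaryHomotopy_hom_of_rel (τ : ∀ i j, X.X i ⟶ Y.X j) {i' i j j' : ι}
    (hi : c.Rel i i') (hij : c.Rel j i) (hj : c.Rel j' j) :
    (boundaryHomotopy τ).hom i j = X.d i i' ≫ τ i' j - τ i j' ≫ Y.d j' j := by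
  obtain rfl := c.next_eq' hi
  obtain rfl := c.prev_eq' hj
  simp only [boundaryHomotopy, if_pos hij]

lemma comp_boundaryHomotopy_hom (μ : X₁ ⟶ X₂) (τ : ∀ i j, X₂.X i ⟶ Y.X j) (i j : ι) :
    μ.f i ≫ (boundaryHomotopy τ).hom i j =
      (boundaryHomotopy fun i j => μ.f i ≫ τ i j).hom i j := by
  simp only [boundaryHomotopy]
  split_ifs
  · simp [Preadditive.comp_sub]
  · simp

def OneCyclesAreBoundaries (X Y : HomologicalComplex C c) : Prop :=
  ∀ H : Homotopy (0 : X ⟶ Y) 0, ∃ τ : ∀ i j, X.X i ⟶ Y.X j, H = boundaryHomotopy τ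

lemma exists_homotopy_restrict_eq (μ : X₁ ⟶ X₂) (hμ : ∀ i, IsSplitMono (μ.f i))
    (hX₁ : OneCyclesAreBoundaries X₁ Y) {g : X₂ ⟶ Y} (s : Homotopy (μ ≫ g) 0)
    (s₂ : Homotopy g 0) :
    ∃ s' : Homotopy g 0, ∀ i j, μ.f i ≫ s'.hom i j = s.hom i j := by
  obtain ⟨τ, hτ⟩ := hX₁ (((s₂.compLeft μ).trans (.ofEq comp_zero)).symm.trans s)
  let r i : X₂.X i ⟶ X₁.X i := have := hμ i; retraction (μ.f i)
  have hr i : μ.f i ≫ r i = 𝟙 _ := have := hμ i; IsSplitMono.id (μ.f i)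
  refine ⟨s₂.trans (boundaryHomotopy fun i j => r i ≫ τ i j), fun i j => ?_⟩
  have hτij := congrArg (fun H => H.hom i j) hτ
  simp only [Homotopy.trans, Homotopy.symm, Homotopy.compLeft, Homotopy.ofEq, Pi.add_apply,
    Pi.neg_apply, add_zero] at hτij ⊢
  rw [Preadditive.comp_add, comp_boundaryHomotopy_hom]
  simp only [← assoc, hr, id_comp]
  rw [← hτij]
  abel

end GeneralShape

section Colimits

variable {C : Type*} [Category C] [Preadditive C] {ι : Type*} {c : ComplexShape ι}
  {Y : HomologicalComplex C c}

lemma nonempty_homotopy_zero_of_isColimit {J : Type*} [Category J] [HasColimitsOfShape J C]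
    {F : J ⥤ HomologicalComplex C c} {t : Cocone F} (ht : IsColimit t) (g : t.pt ⟶ Y)
    (S : ∀ j, Homotopy (t.ι.app j ≫ g) 0)
    (hS : ∀ ⦃j j' : J⦄ (f : j ⟶ j') (i k : ι), (F.map f).f i ≫ (S j').hom i k = (S j).hom i k) :
    Nonempty (Homotopy g 0) := by
  have ht' i : IsColimit ((HomologicalComplex.eval C c i).mapCocone t) :=
    isColimitOfPreserves _ ht
  let σ i k : t.pt.X i ⟶ Y.X k := (ht' i).desc
    { pt := Y.X k
      ι := { app j := (S j).hom i k, naturality _ _ f := (hS f i k).trans (comp_id _).symm } }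
  have hσ j i k : (t.ι.app j).f i ≫ σ i k = (S j).hom i k := (ht' i).fac _ j
  have hext {i : ι} {Z : C} {a b : t.pt.X i ⟶ Z}
      (h : ∀ j, (t.ι.app j).f i ≫ a = (t.ι.app j).f i ≫ b) : a = b := (ht' i).hom_ext h
  refine ⟨{ hom := σ, zero i k hik := hext fun j => ?_, comm i := hext fun j => ?_ }⟩
  · rw [hσ, (S j).zero i k hik, comp_zero]
  · have hSj := (S j).comm i
    simp only [HomologicalComplex.comp_f, HomologicalComplex.zero_f_apply, add_zero] at hSj
    rw [hSj, HomologicalComplex.zero_f_apply, add_zero, Preadditive.comp_add,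
      ← dNext_comp_left, ← prevD_comp_left]
    simp only [hσ]

lemma map_comp_eq_of_succ {D : Type*} [Category D] (G : ℕ ⥤ D) {Z : D} (x : ∀ n, G.obj n ⟶ Z)
    (hx : ∀ n, G.map (homOfLE n.le_succ) ≫ x (n + 1) = x n) {m n : ℕ} (f : m ⟶ n) :
    G.map f ≫ x n = x m := by
  simpa using (NatTrans.ofSequence (F := G) (G := (Functor.const ℕ).obj Z) x
    (fun n => by simpa using hx n)).naturality f

lemma exists_compatible_homotopies {F : ℕ ⥤ HomologicalComplex C c} (t : Cocone F)
    (g : t.pt ⟶ Y) (hF : ∀ (n : ℕ) i, IsSplitMono ((F.map (homOfLE n.le_succ)).f i))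
    (hY : ∀ n, OneCyclesAreBoundaries (F.obj n) Y)
    (hg : ∀ n, Nonempty (Homotopy (t.ι.app n ≫ g) 0)) :
    ∃ S : ∀ n, Homotopy (t.ι.app n ≫ g) 0, ∀ (n : ℕ) i k,
      (F.map (homOfLE n.le_succ)).f i ≫ (S (n + 1)).hom i k = (S n).hom i k := by
  have step n (s : Homotopy (t.ι.app n ≫ g) 0) : ∃ s' : Homotopy (t.ι.app (n + 1) ≫ g) 0,
      ∀ i k, (F.map (homOfLE n.le_succ)).f i ≫ s'.hom i k = s.hom i k := by
    simpa [Homotopy.trans, Homotopy.ofEq] using exists_homotopy_restrict_eq _ (hF n) (hY n)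
      ((Homotopy.ofEq (by rw [t.w_assoc])).trans s) (hg (n + 1)).some
  choose next hnext using step
  exact ⟨fun n => Nat.rec (hg 0).some next n, fun n => hnext n _⟩

lemma nonempty_homotopy_zero_of_isColimit_nat {F : ℕ ⥤ HomologicalComplex C c}
    [HasColimitsOfShape ℕ C] {t : Cocone F} (ht : IsColimit t) (g : t.pt ⟶ Y)
    (hF : ∀ (n : ℕ) i, IsSplitMono ((F.map (homOfLE n.le_succ)).f i))
    (hY : ∀ n, OneCyclesAreBoundaries (F.obj n) Y)
    (hg : ∀ n, Nonempty (Homotopy (t.ι.app n ≫ g) 0)) :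
    Nonempty (Homotopy g 0) := by
  obtain ⟨S, hS⟩ := exists_compatible_homotopies t g hF hY hg
  exact nonempty_homotopy_zero_of_isColimit ht g S fun _ _ f i k =>
    map_comp_eq_of_succ (F ⋙ HomologicalComplex.eval C c i) (fun n => (S n).hom i k)
      (fun n => hS n i k) f

end Colimits

lemma f_eq_of_homotopy_zero {C : Type*} [Category C] [Preadditive C] {X Y : ChainComplex C ℤ}
    {f : X ⟶ Y} (H : Homotopy f 0) {i i' i'' : ℤ} (hi' : i' + 1 = i) (hi'' : i + 1 = i'') :
    f.f i = X.d i i' ≫ H.hom i' i + H.hom i i'' ≫ Y.d i'' i := by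
  simpa [dNext_eq _ (show (ComplexShape.down ℤ).Rel i i' from hi'),
    prevD_eq _ (show (ComplexShape.down ℤ).Rel i'' i from hi'')] using H.comm i

def shiftCXIso (E : Cx A) {n n' a b : ℤ} (h : a - n = b - n') :
    (shiftC E n).X a ≅ (shiftC E n').X b :=
  E.XIsoOfEq h

def shiftCZeroIso (E : Cx A) : shiftC E 0 ≅ E :=
  HomologicalComplex.Hom.isoOfComponents (fun m => E.XIsoOfEq (sub_zero m)) fun i j _ => by
    change (E.XIsoOfEq _).hom ≫ E.d i j =
      ((Int.negOnePow 0 : ℤ) • E.d (i - 0) (j - 0)) ≫ (E.XIsoOfEq _).hom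
    simp [HomologicalComplex.XIsoOfEq_hom_comp_d, HomologicalComplex.d_comp_XIsoOfEq_hom]

section Shift

variable {X E : Cx A} {n : ℤ}

lemma d_comp_shiftCXIso_hom {a a' b b' : ℤ} (h : a - n = b - (n - 1))
    (h' : a' - n = b' - (n - 1)) :
    (shiftC E n).d a a' ≫ (shiftCXIso E h').hom =
      -((shiftCXIso E h).hom ≫ (shiftC E (n - 1)).d b b') := by
  change ((n.negOnePow : ℤ) • E.d (a - n) (a' - n)) ≫ (E.XIsoOfEq h').hom =
    -((E.XIsoOfEq h).hom ≫ (((n - 1).negOnePow : ℤ) • E.d (b - (n - 1)) (b' - (n - 1))))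
  simp [Int.negOnePow_sub, HomologicalComplex.XIsoOfEq_hom_comp_d,
    HomologicalComplex.d_comp_XIsoOfEq_hom]

/-- The sign of `d_comp_shiftCXIso_hom` turns the cycle condition `d ≫ σ + σ ≫ d = 0` into
commutation with the differentials. -/
def cycleShiftHom (H : Homotopy (0 : X ⟶ shiftC E n) 0) : X ⟶ shiftC E (n - 1) where
  f m := H.hom m (m + 1) ≫ (shiftCXIso E (by omega : m + 1 - n = m - (n - 1))).hom
  comm' i j hij := by
    obtain rfl : i = j + 1 := by simp at hij; omega
    have hH := f_eq_of_homotopy_zero H (i' := j) (i'' := j + 1 + 1) rfl rfl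
    rw [HomologicalComplex.zero_f_apply, eq_comm] at hH
    rw [reassoc_of% (eq_neg_of_add_eq_zero_left hH)]
    simp only [Preadditive.neg_comp, assoc]
    rw [d_comp_shiftCXIso_hom (show j + 1 + 1 - n = j + 1 - (n - 1) by omega)]
    simp only [Preadditive.comp_neg, neg_neg]

lemma cycleShiftHom_f (H : Homotopy (0 : X ⟶ shiftC E n) 0) {m k : ℤ} (h : m + 1 = k) :
    (cycleShiftHom H).f m = H.hom m k ≫ (shiftCXIso E (by omega : k - n = m - (n - 1))).hom := by
  subst h; rfl

lemma oneCyclesAreBoundaries_shiftC (h : ∀ φ : X ⟶ shiftC E (n - 1), NullHomotopic φ) :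
    OneCyclesAreBoundaries X (shiftC E n) := by
  intro H
  obtain ⟨G⟩ := h (cycleShiftHom H)
  refine ⟨fun i k => G.hom i (k - 1) ≫ (shiftCXIso E (by omega : k - n = k - 1 - (n - 1))).inv,
    ?_⟩
  ext i j
  by_cases hij : (ComplexShape.down ℤ).Rel j i
  swap; · rw [H.zero i j hij, (boundaryHomotopy _).zero i j hij]
  obtain rfl : i = j - 1 := by simp at hij; omega
  rw [boundaryHomotopy_hom_of_rel _ (i' := j - 1 - 1) (j' := j + 1) (by simp) hij (by simp)]
  have hG := f_eq_of_homotopy_zero G (i := j - 1) (i' := j - 1 - 1) (i'' := j + 1 - 1)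
    (by omega) (by omega)
  rw [cycleShiftHom_f H (show j - 1 + 1 = j by omega)] at hG
  rw [← cancel_mono (shiftCXIso E (show j - n = j - 1 - (n - 1) by omega)).hom, hG]
  simp only [Preadditive.sub_comp, assoc, Iso.inv_hom_id, comp_id,
    d_comp_shiftCXIso_hom (show j + 1 - n = j + 1 - 1 - (n - 1) by omega), Preadditive.comp_neg,
    Iso.inv_hom_id_assoc, sub_neg_eq_add]

end Shift

/-- If every chain map `Aⁱ ⟶ Σⁿ E` is null homotopic for a direct system
with degreewise split monic transitions, then the same holds for the colimit; in particular
every chain map `colim Aⁱ ⟶ E` is null homotopic. -/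
theorem stmt_7 {A : Type u} [Category.{v} A] [Abelian A] [HasColimits A]
    (F : ℕ ⥤ Cx A) (E : Cx A)
    (hsplit : ∀ (i : ℕ) (n : ℤ), IsSplitMono ((F.map (homOfLE (Nat.le_succ i))).f n))
    (h : ∀ (i : ℕ) (n : ℤ) (g : F.obj i ⟶ shiftC E n), NullHomotopic g) :
    (∀ (n : ℤ) (g : colimit F ⟶ shiftC E n), NullHomotopic g) ∧
    (∀ g : colimit F ⟶ E, NullHomotopic g) := by
  have hshift (n : ℤ) (g : colimit F ⟶ shiftC E n) : NullHomotopic g :=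
    nonempty_homotopy_zero_of_isColimit_nat (colimit.isColimit F) g hsplit
      (fun i => oneCyclesAreBoundaries_shiftC (h i (n - 1))) (fun i => h i n _)
  refine ⟨hshift, fun g => ?_⟩
  obtain ⟨H⟩ := hshift 0 (g ≫ (shiftCZeroIso E).inv)
  exact ⟨(Homotopy.ofEq (by simp)).trans
    ((H.compRight (shiftCZeroIso E).hom).trans (.ofEq (by simp)))⟩

end Paper
end

section
/- Let (A, E) be an exact category and consider a commutative square with horizontal admissible monomorphisms i : A ↣ B and i' : A' ↣ B', vertical maps f : A → A' and f' : B → B'. The square is a pushout if and only if the sequence A → B ⊕ A' → B', with first map (i, −f)ᵗ and second map (f', i'), is a short exact sequence in E (i.e., a kernel-cokernel pair belonging to E). -/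
/-! The cokernel of `(i, -f) : A → B ⊕ A'` is the pushout of the square, in any preadditive
category; this gives one direction and identifies `(f', i')` as a cokernel of `(i, -f)`. For the
other, `(i, -f)` factors as the graph `(1, -f) : A → A ⊕ A'`, a shear of the split mono
`A → A ⊕ A'` (admissible, as the kernel of a pulled-back admissible epi), followed by `i ⊕ 1`,
the pushout of `i` along `A → A ⊕ A'`. So `(i, -f)` is an admissible mono, and an admissible mono
forms a sequence of `E` with each of its cokernels. -/

open CategoryTheory Category Limits ZeroObject

universe v u

namespace Paper

variable {A : Type u} [Category.{v} A] [Abelian A]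

/-- A Quillen exact structure on an additive category. -/
structure ExactStructure (B : Type u) [Category.{v} B] [Preadditive B] where
  /-- The distinguished class of kernel-cokernel pairs. -/
  E : ∀ ⦃X Y Z : B⦄, (X ⟶ Y) → (Y ⟶ Z) → Prop
  comp_zero : ∀ ⦃X Y Z : B⦄ (f : X ⟶ Y) (g : Y ⟶ Z), E f g → f ≫ g = 0
  isKernel : ∀ ⦃X Y Z : B⦄ (f : X ⟶ Y) (g : Y ⟶ Z) (h : E f g),
    Nonempty (IsLimit (KernelFork.ofι f (comp_zero f g h)))
  isCokernel : ∀ ⦃X Y Z : B⦄ (f : X ⟶ Y) (g : Y ⟶ Z) (h : E f g),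
    Nonempty (IsColimit (CokernelCofork.ofπ g (comp_zero f g h)))
  isoClosed : ∀ ⦃X Y Z X' Y' Z' : B⦄ (f : X ⟶ Y) (g : Y ⟶ Z) (f' : X' ⟶ Y') (g' : Y' ⟶ Z')
    (α : X ≅ X') (β : Y ≅ Y') (γ : Z ≅ Z'),
    f ≫ β.hom = α.hom ≫ f' → g ≫ γ.hom = β.hom ≫ g' → E f g → E f' g'
  id_admissibleMono : ∀ X : B, ∃ (Z : B) (g : X ⟶ Z), E (𝟙 X) g
  id_admissibleEpi : ∀ X : B, ∃ (Z : B) (f : Z ⟶ X), E f (𝟙 X)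
  mono_comp : ∀ ⦃X Y Z : B⦄ (f : X ⟶ Y) (g : Y ⟶ Z),
    (∃ (W : B) (p : Y ⟶ W), E f p) → (∃ (W : B) (p : Z ⟶ W), E g p) →
    ∃ (W : B) (p : Z ⟶ W), E (f ≫ g) p
  epi_comp : ∀ ⦃X Y Z : B⦄ (f : X ⟶ Y) (g : Y ⟶ Z),
    (∃ (W : B) (j : W ⟶ X), E j f) → (∃ (W : B) (j : W ⟶ Y), E j g) →
    ∃ (W : B) (j : W ⟶ X), E j (f ≫ g)
  pushout : ∀ ⦃X Y : B⦄ (f : X ⟶ Y), (∃ (W : B) (p : Y ⟶ W), E f p) →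
    ∀ ⦃X' : B⦄ (a : X ⟶ X'), ∃ (Y' : B) (f' : X' ⟶ Y') (b : Y ⟶ Y'),
      IsPushout f a b f' ∧ ∃ (W : B) (p : Y' ⟶ W), E f' p
  pullback : ∀ ⦃X Y : B⦄ (g : X ⟶ Y), (∃ (W : B) (j : W ⟶ X), E j g) →
    ∀ ⦃Y' : B⦄ (a : Y' ⟶ Y), ∃ (X' : B) (g' : X' ⟶ Y') (b : X' ⟶ X),
      IsPullback b g' g a ∧ ∃ (W : B) (j : W ⟶ X'), E j g'

/-- Unlike `IsPullback.of_has_biproduct`, this needs no zero object. -/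
lemma isPullback_biprod_fst_snd_zero {B : Type u} [Category.{v} B] [Preadditive B]
    [HasBinaryBiproducts B] (X Y Z : B) :
    IsPullback (biprod.fst : X ⊞ Y ⟶ X) biprod.snd (0 : X ⟶ Z) (0 : Y ⟶ Z) :=
  IsPullback.of_isLimit (PullbackCone.IsLimit.mk (by simp)
    (fun s => biprod.lift s.fst s.snd) (by simp) (by simp)
    (fun s m h₁ h₂ => by apply biprod.hom_ext <;> simpa))

lemma isPushout_biprod_map_id {B : Type u} [Category.{v} B] [Preadditive B]
    [HasBinaryBiproducts B] {X Y : B} (i : X ⟶ Y) (C : B) :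
    IsPushout i (biprod.inl : X ⟶ X ⊞ C) biprod.inl (biprod.map i (𝟙 C)) :=
  IsPushout.of_isColimit (PushoutCocone.IsColimit.mk (inl := biprod.inl)
    (inr := biprod.map i (𝟙 C)) (by simp)
    (fun s => biprod.desc s.inl (biprod.inr ≫ s.inr))
    (fun s => by simp)
    (fun s => by
      apply biprod.hom_ext'
      · simpa using s.condition
      · simp)
    (fun s m h₁ h₂ => by
      apply biprod.hom_ext'
      · simpa using h₁
      · simpa using biprod.inr ≫= h₂))

namespace ExactStructure

variable {B : Type u} [Category.{v} B] [Preadditive B] (ES : ExactStructure B)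

def AdmissibleMono {X Y : B} (i : X ⟶ Y) : Prop := ∃ (Z : B) (p : Y ⟶ Z), ES.E i p

def AdmissibleEpi {Y Z : B} (p : Y ⟶ Z) : Prop := ∃ (X : B) (i : X ⟶ Y), ES.E i p

variable {ES}

lemma E_comp_hom_inv_comp {X Y Y' Z : B} {i : X ⟶ Y} {p : Y ⟶ Z} (h : ES.E i p) (e : Y ≅ Y') :
    ES.E (i ≫ e.hom) (e.inv ≫ p) :=
  ES.isoClosed i p _ _ (Iso.refl _) e (Iso.refl _) (by simp) (by simp) h

lemma E_of_isLimit {X Y Z : B} {p : Y ⟶ Z} (hp : ES.AdmissibleEpi p) {j : X ⟶ Y}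
    (wj : j ≫ p = 0) (hj : IsLimit (KernelFork.ofι j wj)) : ES.E j p := by
  obtain ⟨X', i, h⟩ := hp
  have hk := (ES.isKernel i p h).some
  refine ES.isoClosed i p j p (hk.conePointUniqueUpToIso hj) (Iso.refl _) (Iso.refl _) ?_
    (by simp) h
  simpa using (hk.conePointUniqueUpToIso_hom_comp hj WalkingParallelPair.zero).symm

lemma E_of_isColimit {X Y Z : B} {i : X ⟶ Y} (hi : ES.AdmissibleMono i) {q : Y ⟶ Z}
    (wq : i ≫ q = 0) (hq : IsColimit (CokernelCofork.ofπ q wq)) : ES.E i q := by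
  obtain ⟨Z', p, h⟩ := hi
  have hc := (ES.isCokernel i p h).some
  refine ES.isoClosed i p i q (Iso.refl _) (Iso.refl _) (hc.coconePointUniqueUpToIso hq)
    (by simp) ?_ h
  simpa using hc.comp_coconePointUniqueUpToIso_hom hq WalkingParallelPair.one

lemma AdmissibleMono.of_isPushout {X Y X' Y' : B} {i : X ⟶ Y} {a : X ⟶ X'} {b : Y ⟶ Y'}
    {i' : X' ⟶ Y'} (hi : ES.AdmissibleMono i) (h : IsPushout i a b i') : ES.AdmissibleMono i' := by
  obtain ⟨Y'', i'', b', hpo, Z, p, hp⟩ := ES.pushout i hi a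
  have hE := E_comp_hom_inv_comp hp (hpo.isoIsPushout _ _ h)
  rw [hpo.inr_isoIsPushout_hom] at hE
  exact ⟨_, _, hE⟩

lemma AdmissibleEpi.of_isPullback {X Y X' Y' : B} {p : X ⟶ Y} {a : Y' ⟶ Y} {b : X' ⟶ X}
    {p' : X' ⟶ Y'} (hp : ES.AdmissibleEpi p) (h : IsPullback b p' p a) : ES.AdmissibleEpi p' := by
  obtain ⟨X'', p'', b', hpb, W, j, hj⟩ := ES.pullback p hp a
  have hE := E_comp_hom_inv_comp hj (hpb.isoIsPullback _ _ h)
  rw [hpb.isoIsPullback_inv_snd] at hE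
  exact ⟨_, _, hE⟩

variable (ES) in
lemma exists_admissibleEpi_zero (X : B) : ∃ Z : B, ES.AdmissibleEpi (0 : X ⟶ Z) := by
  obtain ⟨Z, g, h⟩ := ES.id_admissibleMono X
  obtain rfl : g = 0 := by simpa using ES.comp_zero _ _ h
  exact ⟨Z, X, 𝟙 X, h⟩

section Biproducts

variable [HasBinaryBiproducts B]

variable (ES) in
lemma E_biprod_inl_snd (X Y : B) : ES.E (biprod.inl : X ⟶ X ⊞ Y) biprod.snd := by
  obtain ⟨Z, h₀⟩ := ES.exists_admissibleEpi_zero X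
  exact E_of_isLimit (h₀.of_isPullback (isPullback_biprod_fst_snd_zero X Y Z)) biprod.inl_snd
    (biprod.isKernelSndKernelFork X Y)

variable (ES) in
lemma admissibleMono_biprod_lift_id {X Y : B} (g : X ⟶ Y) :
    ES.AdmissibleMono (biprod.lift (𝟙 X) g) := by
  have hE := E_comp_hom_inv_comp (ES.E_biprod_inl_snd X Y) (Biprod.unipotentUpper g)
  rw [show biprod.inl ≫ (Biprod.unipotentUpper g).hom = biprod.lift (𝟙 X) g by
    ext <;> simp] at hE
  exact ⟨_, _, hE⟩

lemma AdmissibleMono.biprod_lift {X Y Y' : B} {i : X ⟶ Y} (hi : ES.AdmissibleMono i)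
    (g : X ⟶ Y') : ES.AdmissibleMono (biprod.lift i g) := by
  have h := ES.mono_comp _ _ (ES.admissibleMono_biprod_lift_id g)
    (hi.of_isPushout (isPushout_biprod_map_id i Y'))
  rwa [show biprod.lift (𝟙 X) g ≫ biprod.map i (𝟙 Y') = biprod.lift i g by ext <;> simp] at h

end Biproducts

end ExactStructure

theorem stmt_8_general {B : Type u} [Category.{v} B] [Preadditive B] [HasBinaryBiproducts B]
    (ES : ExactStructure B) {A₀ B₀ A' B' : B}
    (i : A₀ ⟶ B₀) (i' : A' ⟶ B') (f : A₀ ⟶ A') (f' : B₀ ⟶ B')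
    (comm : i ≫ f' = f ≫ i')
    (hi : ∃ (Z : B) (g : B₀ ⟶ Z), ES.E i g) :
    IsPushout i f f' i' ↔ ES.E (biprod.lift i (-f)) (biprod.desc f' i') := by
  constructor
  · intro hpo
    exact ExactStructure.E_of_isColimit (ExactStructure.AdmissibleMono.biprod_lift hi (-f)) _
      hpo.isColimitCokernelCofork
  · intro hE
    have sq : CommSq i f f' i' := ⟨comm⟩
    exact IsPushout.of_isColimit' sq
      (sq.isColimitEquivIsColimitCokernelCofork.symm (ES.isCokernel _ _ hE).some)

/-- In an exact category, a commutative square on two admissible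
monomorphisms `i`, `i'` is a pushout iff `A ↣ B ⊕ A' ↠ B'` is an admissible short exact
sequence. -/
theorem stmt_8 {B : Type u} [Category.{v} B] [Preadditive B] [HasBinaryBiproducts B]
    (ES : ExactStructure B) {A₀ B₀ A' B' : B}
    (i : A₀ ⟶ B₀) (i' : A' ⟶ B') (f : A₀ ⟶ A') (f' : B₀ ⟶ B')
    (comm : i ≫ f' = f ≫ i')
    (hi : ∃ (Z : B) (g : B₀ ⟶ Z), ES.E i g)
    (hi' : ∃ (Z : B) (g : B' ⟶ Z), ES.E i' g) :
    IsPushout i f f' i' ↔ ES.E (biprod.lift i (-f)) (biprod.desc f' i') :=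
  stmt_8_general ES i i' f f' comm hi

end Paper
end

section
/- Let (X, Y) be an admissible balanced pair in an abelian category A, and let E-dwX̃ denote the class of complexes all of whose terms lie in X. Then every bounded below complex X in E-dwX̃ has the property that every chain map from X to any right X-acyclic complex is null homotopic (i.e., bounded below degreewise-X complexes lie in E-dgX̃). -/
open CategoryTheory Category Limits ZeroObject

universe v u

namespace Paper

variable {A : Type u} [Category.{v} A] [Abelian A]

/-!
Let `f : G ⟶ E` with `Gₙ = 0` for `n < b`. Put `sₙ = 0` for `n < b` and, going up one degree
at a time, choose `sₙ : Gₙ ⟶ Eₙ₊₁` with `sₙ ≫ d = fₙ - d ≫ sₙ₋₁`. Such a lift exists because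
`Gₙ ∈ 𝒳` and `Hom(Gₙ, E)` is exact: the identity `f = d s + s d` already holding in degree
`n - 1` makes `fₙ - d ≫ sₙ₋₁` a cycle.
-/

section NullHomotopy

def IsNullHomotopyAt {G E : Cx A} (f : G ⟶ E) (s : ∀ n : ℤ, G.X n ⟶ E.X (n + 1)) (n : ℤ) :
    Prop :=
  f.f n = G.d n (n - 1) ≫ s (n - 1) ≫ (E.XIsoOfEq (sub_add_cancel n 1)).hom + s n ≫ E.d (n + 1) n

lemma nullHomotopic_of_isNullHomotopyAt {G E : Cx A} (f : G ⟶ E)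
    (s : ∀ n : ℤ, G.X n ⟶ E.X (n + 1)) (hs : ∀ n : ℤ, IsNullHomotopyAt f s n) :
    NullHomotopic f := by
  refine ⟨{
    hom := fun i j => if h : i + 1 = j then s i ≫ (E.XIsoOfEq h).hom else 0
    zero := fun i j hij => dif_neg fun h => hij h
    comm := fun n => ?_ }⟩
  rw [dNext_eq _ (show (ComplexShape.down ℤ).Rel n (n - 1) from sub_add_cancel n 1),
    prevD_eq _ (show (ComplexShape.down ℤ).Rel (n + 1) n from rfl),
    dif_pos (sub_add_cancel n 1), dif_pos rfl, hs n]
  simp only [HomologicalComplex.XIsoOfEq_rfl, Iso.refl_hom, comp_id, HomologicalComplex.zero_f,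
    add_zero]

variable {𝒳 : Set A}

open Classical in
noncomputable def RightAcyclicAt.liftOrZero {E : Cx A} {n : ℤ} (hE : RightAcyclicAt 𝒳 E n)
    {X : A} (hX : X ∈ 𝒳) (g : X ⟶ E.X n) : X ⟶ E.X (n + 1) :=
  if h : g ≫ E.d n (n - 1) = 0 then (hE hX g h).choose else 0

lemma RightAcyclicAt.liftOrZero_comp_d {E : Cx A} {n : ℤ} (hE : RightAcyclicAt 𝒳 E n)
    {X : A} (hX : X ∈ 𝒳) {g : X ⟶ E.X n} (hg : g ≫ E.d n (n - 1) = 0) :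
    hE.liftOrZero hX g ≫ E.d (n + 1) n = g := by
  rw [liftOrZero, dif_pos hg]
  exact (hE hX g hg).choose_spec

variable {G E : Cx A} (hG : ∀ n : ℤ, G.X n ∈ 𝒳) (hE : RightAcyclic 𝒳 E) (f : G ⟶ E) (b : ℤ)

noncomputable def nullHomotopyOfBoundedBelow (n : ℤ) : G.X n ⟶ E.X (n + 1) :=
  if n < b then 0 else
    (hE n).liftOrZero (hG n) (f.f n - G.d n (n - 1) ≫ nullHomotopyOfBoundedBelow (n - 1) ≫
      (E.XIsoOfEq (sub_add_cancel n 1)).hom)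
termination_by (n - b + 1).toNat
decreasing_by omega

lemma isNullHomotopyAt_nullHomotopyOfBoundedBelow_of_not_lt {n : ℤ} (hn : ¬n < b)
    (hprev : IsNullHomotopyAt f (nullHomotopyOfBoundedBelow hG hE f b) (n - 1)) :
    IsNullHomotopyAt f (nullHomotopyOfBoundedBelow hG hE f b) n := by
  have hcycle : (f.f n - G.d n (n - 1) ≫ nullHomotopyOfBoundedBelow hG hE f b (n - 1) ≫
      (E.XIsoOfEq (sub_add_cancel n 1)).hom) ≫ E.d n (n - 1) = 0 := by
    rw [Preadditive.sub_comp, assoc, assoc, HomologicalComplex.XIsoOfEq_hom_comp_d,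
      eq_sub_of_add_eq' (Eq.symm hprev), Preadditive.comp_sub, ← assoc, G.d_comp_d, zero_comp,
      sub_zero, f.comm, sub_self]
  rw [IsNullHomotopyAt, nullHomotopyOfBoundedBelow.eq_1 hG hE f b n, if_neg hn,
    (hE n).liftOrZero_comp_d (hG n) hcycle, add_sub_cancel]

lemma isNullHomotopyAt_nullHomotopyOfBoundedBelow (hb : ∀ n : ℤ, n < b → IsZero (G.X n))
    (n : ℤ) : IsNullHomotopyAt f (nullHomotopyOfBoundedBelow hG hE f b) n := by
  have below : ∀ n < b, IsNullHomotopyAt f (nullHomotopyOfBoundedBelow hG hE f b) n :=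
    fun n hn => (hb n hn).eq_of_src _ _
  by_cases hn : n < b
  · exact below n hn
  · refine Int.leInduction (motive := fun n _ => IsNullHomotopyAt f _ n)
      (below (b - 1) (by omega)) (fun k _ ih => ?_) n (by omega)
    refine isNullHomotopyAt_nullHomotopyOfBoundedBelow_of_not_lt hG hE f b (by omega) ?_
    rwa [add_sub_cancel_right]

end NullHomotopy

theorem stmt_9_general {A : Type u} [Category.{v} A] [Abelian A]
    (𝒳 : Set A)
    (G : Cx A) (hG : ∀ n : ℤ, G.X n ∈ 𝒳) (b : ℤ) (hb : ∀ n : ℤ, n < b → IsZero (G.X n)) :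
    G ∈ EdgX 𝒳 :=
  ⟨hG, fun _ hE f => nullHomotopic_of_isNullHomotopyAt f _
    (isNullHomotopyAt_nullHomotopyOfBoundedBelow hG hE f b hb)⟩

/-- For an admissible balanced pair, every bounded below complex with all
terms in `𝒳` lies in `E-dg X̃`. -/
theorem stmt_9 {A : Type u} [Category.{v} A] [Abelian A]
    (𝒳 𝒴 : Set A) (hbp : BalancedPair 𝒳 𝒴) (hadm : Admissible 𝒳 𝒴)
    (G : Cx A) (hG : ∀ n : ℤ, G.X n ∈ 𝒳) (b : ℤ) (hb : ∀ n : ℤ, n < b → IsZero (G.X n)) :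
    G ∈ EdgX 𝒳 :=
  stmt_9_general 𝒳 G hG b hb

end Paper
end

section
/- Let (X, Y) be an admissible balanced pair in a complete and cocomplete abelian category A. For every right X-acyclic complex E there exists a short exact sequence 0 → K → X → E → 0 in Ch(A, E) where X is a contractible complex of the form ⊕ₙ Dⁿ⁺¹(X'ₙ) with each X'ₙ ∈ X (i.e., X ∈ X̃_E), and K is right X-acyclic. -/
open CategoryTheory Category Limits ZeroObject

universe v u

namespace Paper

variable {A : Type u} [Category.{v} A] [Abelian A]

/-
Choose right `𝒳`-approximations `b n : F n ⟶ Zₙ E` of the cycles of `E` and, by right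
`𝒳`-acyclicity of `E`, lifts `t n : F (n - 1) ⟶ Eₙ` of `b (n - 1)` along the differential. They
assemble into a chain map `p : ⊕ₙ Dⁿ⁺¹(F n) ⟶ E`, which is surjective on `Hom(X, -)` for `X ∈ 𝒳`
in each degree (first approximate `d ∘ g`, then correct `g` by a cycle); admissibility makes it a
degreewise epimorphism. The long exact `Hom(X, -)`-sequence of `0 → ker p → ⊕ₙ Dⁿ⁺¹(F n) → E → 0`,
whose middle term is contractible, shows that `ker p` is right `𝒳`-acyclic.
-/

section

variable {𝒳 : Set A}

theorem RightAcyclic.exists_lift {E : Cx A} (hE : RightAcyclic 𝒳 E) {X : A} (hX : X ∈ 𝒳)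
    {k m n : ℤ} (hkm : k + 1 = m) (hmn : m + 1 = n) (g : X ⟶ E.X m) (hg : g ≫ E.d m k = 0) :
    ∃ h : X ⟶ E.X n, h ≫ E.d n m = g := by
  obtain rfl : k = m - 1 := by omega
  subst hmn
  exact hE m hX g hg

/-- The connecting-morphism argument of the long exact `Hom(X, -)`-sequence. -/
theorem RightAcyclic.of_chEExact {K G E : Cx A} {i : K ⟶ G} {p : G ⟶ E}
    (hip : ChEExact 𝒳 i p) (hG : RightAcyclic 𝒳 G) (hE : RightAcyclic 𝒳 E) :
    RightAcyclic 𝒳 K := by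
  intro n X hX g hg
  obtain ⟨h, hh⟩ := hG n hX (g ≫ i.f n) (by rw [assoc, i.comm, reassoc_of% hg, zero_comp])
  obtain ⟨w₀, hS₀, -⟩ := hip n
  obtain ⟨w₁, hS₁, -⟩ := hip (n + 1)
  obtain ⟨-, -, hlift⟩ := hip (n + 1 + 1)
  have hhp : (h ≫ p.f (n + 1)) ≫ E.d (n + 1) n = 0 := by
    rw [assoc, p.comm, reassoc_of% hh, w₀, comp_zero]
  obtain ⟨u, hu⟩ := hE.exists_lift hX rfl rfl _ hhp
  obtain ⟨v, hv⟩ := hlift hX u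
  have := hS₁.mono_f
  obtain ⟨l, hl⟩ := hS₁.exact.lift' (h - v ≫ G.d (n + 1 + 1) (n + 1)) (by
    change _ ≫ p.f (n + 1) = 0
    rw [Preadditive.sub_comp, assoc, ← p.comm, reassoc_of% hv, hu, sub_self])
  have := hS₀.mono_f
  refine ⟨l, ?_⟩
  rw [← cancel_mono (i.f n), assoc, ← i.comm]
  change l ≫ i.f (n + 1) ≫ _ = _
  rw [reassoc_of% hl, Preadditive.sub_comp, assoc, G.d_comp_d, comp_zero, sub_zero, hh]

theorem epi_of_forall_exists_lift {C : Type*} [Category C] {𝒞 : Set C}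
    (hfin : ∀ M : C, ∃ X ∈ 𝒞, ∃ f : X ⟶ M, IsRightApprox 𝒞 f)
    (hepi : ∀ ⦃X M : C⦄, X ∈ 𝒞 → ∀ f : X ⟶ M, IsRightApprox 𝒞 f → Epi f)
    {W Z : C} (p : W ⟶ Z) (hp : ∀ ⦃X : C⦄, X ∈ 𝒞 → ∀ g : X ⟶ Z, ∃ h : X ⟶ W, h ≫ p = g) :
    Epi p := by
  obtain ⟨X, hX, q, hq⟩ := hfin Z
  have := hepi hX q hq
  obtain ⟨h, rfl⟩ := hp hX q
  exact epi_of_epi h p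

theorem chEExact_kernel_ι {G E : Cx A} (p : G ⟶ E) (hp : ∀ n, Epi (p.f n))
    (hlift : ∀ n ⦃X : A⦄, X ∈ 𝒳 → ∀ g : X ⟶ E.X n, ∃ h : X ⟶ G.X n, h ≫ p.f n = g) :
    ChEExact 𝒳 (kernel.ι p) p := by
  have := HomologicalComplex.epi_of_epi_f p hp
  have hS : (ShortComplex.mk _ _ (kernel.condition p)).ShortExact :=
    { exact := ShortComplex.exact_of_f_is_kernel _ (kernelIsKernel p) }
  exact fun n ↦ ⟨_, (HomologicalComplex.shortExact_iff_degreewise_shortExact _).1 hS n, hlift n⟩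

theorem exists_kernel_rightApprox (hfin : ∀ M : A, ∃ X ∈ 𝒳, ∃ f : X ⟶ M, IsRightApprox 𝒳 f)
    {M N : A} (f : M ⟶ N) :
    ∃ X ∈ 𝒳, ∃ b : X ⟶ M, b ≫ f = 0 ∧
      ∀ ⦃X' : A⦄, X' ∈ 𝒳 → ∀ g : X' ⟶ M, g ≫ f = 0 → ∃ h : X' ⟶ X, h ≫ b = g := by
  obtain ⟨X, hX, a, ha⟩ := hfin (kernel f)
  refine ⟨X, hX, a ≫ kernel.ι f, by simp, fun X' hX' g hg ↦ ?_⟩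
  obtain ⟨h, hh⟩ := ha hX' (kernel.lift f g hg)
  exact ⟨h, by rw [← assoc, hh, kernel.lift_ι]⟩

theorem disk_X_of_eq_top (M : A) {n k : ℤ} (h : k = n) : (disk M n).X k = M :=
  if_pos (Or.inl h)

theorem disk_X_of_eq_bot (M : A) {n k : ℤ} (h : k = n - 1) : (disk M n).X k = M :=
  if_pos (Or.inr h)

theorem isZero_disk_X (M : A) {n k : ℤ} (h₁ : k ≠ n) (h₂ : k ≠ n - 1) :
    IsZero ((disk M n).X k) := by
  rw [show (disk M n).X k = 0 from if_neg (by tauto)]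
  exact isZero_zero A

theorem disk_d_of_eq (M : A) {n i j : ℤ} (hi : i = n) (hj : j = n - 1) :
    (disk M n).d i j = eqToHom ((disk_X_of_eq_top M hi).trans (disk_X_of_eq_bot M hj).symm) :=
  dif_pos ⟨hi, hj⟩

theorem disk_d_of_ne (M : A) {n i j : ℤ} (hi : i ≠ n) : (disk M n).d i j = 0 :=
  dif_neg (by tauto)

noncomputable def diskDesc (M : A) (n : ℤ) {T : Cx A} (f : M ⟶ T.X n) : disk M n ⟶ T where
  f k :=
    if h : k = n then eqToHom (disk_X_of_eq_top M h) ≫ f ≫ eqToHom (congrArg T.X h.symm)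
    else if h' : k = n - 1 then eqToHom (disk_X_of_eq_bot M h') ≫ f ≫ T.d n k
    else 0
  comm' i j hij := by
    obtain rfl : j = i - 1 := by simp only [ComplexShape.down_Rel] at hij; omega
    by_cases hi : i = n
    · subst hi
      simp [disk_d_of_eq M rfl rfl]
    · rw [disk_d_of_ne M hi, zero_comp, dif_neg hi]
      split_ifs with h'
      · subst h'
        simp
      · exact zero_comp

/-- The complex `⊕ₙ Dⁿ⁺¹(F n)` written out degreewise: `F (n - 1) ⊞ F n` in degree `n`. -/
@[reducible] noncomputable def diskSum (F : ℤ → A) : Cx A where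
  X n := F (n - 1) ⊞ F n
  d i j := if h : j + 1 = i then
      biprod.fst ≫ eqToHom (congrArg F (show i - 1 = j by omega)) ≫ biprod.inr else 0
  shape _ _ hij := dif_neg hij
  d_comp_d' _ _ _ _ _ := by split_ifs <;> simp

theorem diskSum_d (F : ℤ → A) {i j : ℤ} (h : j + 1 = i) :
    (diskSum F).d i j = biprod.fst ≫ eqToHom (congrArg F (by omega)) ≫ biprod.inr :=
  dif_pos h

theorem rightAcyclic_diskSum (𝒳 : Set A) (F : ℤ → A) : RightAcyclic 𝒳 (diskSum F) := by
  intro n X _ g hg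
  rw [diskSum_d F (sub_add_cancel n 1), ← assoc, ← assoc] at hg
  have hfst : g ≫ biprod.fst = 0 := zero_of_comp_mono _ (zero_of_comp_mono _ hg)
  refine ⟨g ≫ biprod.snd ≫ eqToHom (congrArg F (add_sub_cancel_right n 1).symm) ≫ biprod.inl, ?_⟩
  rw [diskSum_d F rfl]
  ext <;> simp [hfst]

section diskSumIso

variable (F : ℤ → A)

noncomputable def diskSumι (k : ℤ) : disk (F k) (k + 1) ⟶ diskSum F :=
  diskDesc _ _ (eqToHom (congrArg F (add_sub_cancel_right k 1).symm) ≫ biprod.inl)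

theorem diskSumι_f_top {k n : ℤ} (h : k + 1 = n) :
    (diskSumι F k).f n =
      eqToHom ((disk_X_of_eq_top _ h.symm).trans (congrArg F (by omega))) ≫ biprod.inl := by
  subst h
  simp [diskSumι, diskDesc]

theorem diskSumι_f_bot (k : ℤ) :
    (diskSumι F k).f k = eqToHom (disk_X_of_eq_bot _ (by omega)) ≫ biprod.inr := by
  simp [diskSumι, diskDesc]

variable [HasColimits A]

theorem sigma_ι_f_congr (D : ℤ → Cx A) {j j' : ℤ} (h : j = j') (n : ℤ) :
    (Sigma.ι D j).f n = eqToHom (by rw [h]) ≫ (Sigma.ι D j').f n := by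
  subst h
  simp

noncomputable def diskSumToSigma : diskSum F ⟶ ∐ fun n ↦ disk (F n) (n + 1) where
  f n := biprod.desc
    (eqToHom (disk_X_of_eq_top _ (sub_add_cancel n 1).symm).symm ≫
      (Sigma.ι (fun m ↦ disk (F m) (m + 1)) (n - 1)).f n)
    (eqToHom (disk_X_of_eq_bot _ (add_sub_cancel_right n 1).symm).symm ≫
      (Sigma.ι (fun m ↦ disk (F m) (m + 1)) n).f n)
  comm' i j hij := by
    obtain rfl : j = i - 1 := by simp only [ComplexShape.down_Rel] at hij; omega
    rw [diskSum_d F (sub_add_cancel i 1)]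
    ext
    · simp only [biprod.inl_desc_assoc, assoc, HomologicalComplex.Hom.comm,
        disk_d_of_eq _ (sub_add_cancel i 1).symm (add_sub_cancel_right (i - 1) 1).symm]
      simp
    · simp [disk_d_of_ne _ (show i ≠ i + 1 by omega)]

noncomputable def diskSumIso : diskSum F ≅ ∐ fun n ↦ disk (F n) (n + 1) where
  hom := diskSumToSigma F
  inv := Sigma.desc (diskSumι F)
  hom_inv_id := by
    ext n : 1
    have hι (k : ℤ) : (Sigma.ι (fun m ↦ disk (F m) (m + 1)) k).f n ≫
        (Sigma.desc (diskSumι F)).f n = (diskSumι F k).f n := by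
      rw [← HomologicalComplex.comp_f, Sigma.ι_desc]
    apply biprod.hom_ext'
    · simp [diskSumToSigma, hι, diskSumι_f_top F (sub_add_cancel n 1)]
    · simp [diskSumToSigma, hι, diskSumι_f_bot]
  inv_hom_id := by
    ext k n
    by_cases h₁ : k + 1 = n
    · subst h₁
      simp [diskSumToSigma, diskSumι_f_top F rfl,
        sigma_ι_f_congr _ (add_sub_cancel_right k 1)]
    · by_cases h₂ : n = k
      · subst h₂
        simp [diskSumToSigma, diskSumι_f_bot]
      · exact (isZero_disk_X _ (by omega) (by omega)).eq_of_src _ _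

end diskSumIso

section diskSumDesc

variable {F : ℤ → A} {E : Cx A} (t : ∀ n, F (n - 1) ⟶ E.X n) (b : ∀ n, F n ⟶ E.X n)
  (hb : ∀ n, b n ≫ E.d n (n - 1) = 0) (ht : ∀ n, t n ≫ E.d n (n - 1) = b (n - 1))

noncomputable def diskSumDesc : diskSum F ⟶ E where
  f n := biprod.desc (t n) (b n)
  comm' i j hij := by
    obtain rfl : j = i - 1 := by simp only [ComplexShape.down_Rel] at hij; omega
    rw [diskSum_d F (sub_add_cancel i 1)]
    ext <;> simp [hb, ht]

theorem exists_lift_diskSumDesc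
    (happrox : ∀ n ⦃X : A⦄, X ∈ 𝒳 → ∀ g : X ⟶ E.X n, g ≫ E.d n (n - 1) = 0 →
      ∃ h : X ⟶ F n, h ≫ b n = g)
    (n : ℤ) ⦃X : A⦄ (hX : X ∈ 𝒳) (g : X ⟶ E.X n) :
    ∃ h : X ⟶ (diskSum F).X n, h ≫ (diskSumDesc t b hb ht).f n = g := by
  obtain ⟨u, hu⟩ := happrox (n - 1) hX (g ≫ E.d n (n - 1)) (by simp)
  obtain ⟨w, hw⟩ := happrox n hX (g - u ≫ t n)
    (by rw [Preadditive.sub_comp, assoc, ht, hu, sub_self])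
  exact ⟨biprod.lift u w, by simp [diskSumDesc, hw]⟩

end diskSumDesc

end

theorem stmt_12_general {A : Type u} [Category.{v} A] [Abelian A] [HasColimits A]
    (𝒳 𝒴 : Set A) (hbp : BalancedPair 𝒳 𝒴) (hadm : Admissible 𝒳 𝒴)
    (E : Cx A) (hE : RightAcyclic 𝒳 E) :
    ∃ (K G : Cx A) (i : K ⟶ G) (p : G ⟶ E),
      ChEExact 𝒳 i p ∧ RightAcyclic 𝒳 K ∧
      ∃ F : ℤ → A, (∀ n : ℤ, F n ∈ 𝒳) ∧
        Nonempty (G ≅ ∐ fun n : ℤ => disk (F n) (n + 1)) := by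
  choose F hF b hb happrox using
    fun n ↦ exists_kernel_rightApprox hbp.contravariantlyFinite (E.d n (n - 1))
  choose t ht using fun n ↦
    hE.exists_lift (hF (n - 1)) (sub_add_cancel _ 1) (sub_add_cancel n 1) _ (hb (n - 1))
  let p := diskSumDesc t b hb ht
  have hlift := exists_lift_diskSumDesc t b hb ht happrox
  have hp (n : ℤ) : Epi (p.f n) :=
    epi_of_forall_exists_lift hbp.contravariantlyFinite hadm.1 _ (hlift n)
  have hip := chEExact_kernel_ι p hp hlift
  exact ⟨_, _, _, p, hip, RightAcyclic.of_chEExact hip (rightAcyclic_diskSum 𝒳 F) hE,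
    F, hF, ⟨diskSumIso F⟩⟩

/-- Every right `𝒳`-acyclic complex `E` is an admissible quotient of a
contractible complex of the form `⊕ₙ Dⁿ⁺¹(X'ₙ)` with `X'ₙ ∈ 𝒳`, with right `𝒳`-acyclic
kernel. -/
theorem stmt_12 {A : Type u} [Category.{v} A] [Abelian A] [HasLimits A] [HasColimits A]
    (𝒳 𝒴 : Set A) (hbp : BalancedPair 𝒳 𝒴) (hadm : Admissible 𝒳 𝒴)
    (E : Cx A) (hE : RightAcyclic 𝒳 E) :
    ∃ (K G : Cx A) (i : K ⟶ G) (p : G ⟶ E),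
      ChEExact 𝒳 i p ∧ RightAcyclic 𝒳 K ∧
      ∃ F : ℤ → A, (∀ n : ℤ, F n ∈ 𝒳) ∧
        Nonempty (G ≅ ∐ fun n : ℤ => disk (F n) (n + 1)) :=
  stmt_12_general 𝒳 𝒴 hbp hadm E hE

end Paper
end
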